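/- E[(f∘X)(f∘X')] = σ_Y² + μ². That is, for a pair X, X' that are conditionally independent given σ(Y) with the same conditional distribution given σ(Y), the expectation of the product f(X)·f(X') equals the variance of the conditional expectation E[f∘X | σ(Y)] plus the square of the mean of f∘X (the pick-freeze identity). -/

import Mathlib

/-!
Truncate `f` at level `n`. For the bounded function `fₙ := truncation f n` the two hypotheses give
`E[fₙ(X) fₙ(X') | 𝓖] = E[fₙ(X) | 𝓖]²` a.e., hence `E[fₙ(X) fₙ(X')] = E[E[fₙ(X) | 𝓖]²]`.
As `n → ∞` the left side converges by dominated convergence (dominated by `|f(X)| |f(X')|`,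
integrable by Cauchy–Schwarz), and the right side converges to `E[E[f(X) | 𝓖]²]` because
`fₙ(X) → f(X)` in `L²` and conditional expectation is an `L²` contraction. Finally
`E[E[f(X) | 𝓖]²] = Var(E[f(X) | 𝓖]) + E[f(X)]²`.
-/

open MeasureTheory ProbabilityTheory Filter Topology
open scoped ENNReal

section

variable {α ι β γ : Type*} {m m₀ : MeasurableSpace α} {μ : Measure α}

theorem Measurable.truncation {f : α → ℝ} (hf : Measurable f) (A : ℝ) :
    Measurable (truncation f A) :=
  (measurable_id.indicator measurableSet_Ioc).comp hf

namespace MeasureTheory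

theorem unifIntegrable_of_norm_le [NormedAddCommGroup β] [NormedAddCommGroup γ] {p : ℝ≥0∞}
    (hp : 1 ≤ p) (hp' : p ≠ ∞) {f : ι → α → β} {g : α → γ} (hg : MemLp g p μ)
    (hfg : ∀ i, ∀ᵐ x ∂μ, ‖f i x‖ ≤ ‖g x‖) : UnifIntegrable f p μ := by
  intro ε hε
  obtain ⟨δ, hδ, hg_ui⟩ := unifIntegrable_const (ι := Unit) hp hp' hg hε
  refine ⟨δ, hδ, fun i s hs hμs => (eLpNorm_mono_ae ?_).trans (hg_ui () s hs hμs)⟩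
  filter_upwards [hfg i] with x hx
  simp only [norm_indicator_eq_indicator_norm]
  exact Set.indicator_le_indicator hx

theorem integral_sq_eq_inner_toLp {f : α → ℝ} (hf : MemLp f 2 μ) :
    ∫ x, f x ^ 2 ∂μ = inner ℝ (hf.toLp f) (hf.toLp f) := by
  rw [L2.inner_def]
  refine integral_congr_ae ?_
  filter_upwards [hf.coeFn_toLp] with x hx
  simp [hx, sq]

theorem tendsto_integral_sq_of_tendsto_eLpNorm {l : Filter ι} {f : ι → α → ℝ} {g : α → ℝ}
    (hf : ∀ i, MemLp (f i) 2 μ) (hg : MemLp g 2 μ)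
    (hfg : Tendsto (fun i => eLpNorm (f i - g) 2 μ) l (𝓝 0)) :
    Tendsto (fun i => ∫ x, f i x ^ 2 ∂μ) l (𝓝 (∫ x, g x ^ 2 ∂μ)) := by
  have hLp := (Lp.tendsto_Lp_iff_tendsto_eLpNorm'' f hf g hg).2 hfg
  simp only [integral_sq_eq_inner_toLp, hf, hg]
  exact hLp.inner hLp

theorem eLpNorm_condExp_sub_le {p : ℝ≥0∞} (hp : 1 ≤ p) {f g : α → ℝ} (hf : Integrable f μ)
    (hg : Integrable g μ) : eLpNorm (μ[f|m] - μ[g|m]) p μ ≤ eLpNorm (f - g) p μ :=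
  (eLpNorm_congr_ae (condExp_sub hf hg m).symm).trans_le (eLpNorm_condExp_le_eLpNorm _ hp)

theorem tendsto_integral_sq_condExp [IsFiniteMeasure μ] {l : Filter ι} {f : ι → α → ℝ} {g : α → ℝ}
    (hf : ∀ i, MemLp (f i) 2 μ) (hg : MemLp g 2 μ)
    (hfg : Tendsto (fun i => eLpNorm (f i - g) 2 μ) l (𝓝 0)) :
    Tendsto (fun i => ∫ x, (μ[f i|m] x) ^ 2 ∂μ) l (𝓝 (∫ x, (μ[g|m] x) ^ 2 ∂μ)) :=
  tendsto_integral_sq_of_tendsto_eLpNorm (fun i => (hf i).condExp one_le_two)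
    (hg.condExp one_le_two) <| tendsto_of_tendsto_of_tendsto_of_le_of_le tendsto_const_nhds hfg
      (fun _ => zero_le)
      fun i => eLpNorm_condExp_sub_le one_le_two ((hf i).integrable one_le_two)
        (hg.integrable one_le_two)

theorem integral_mul_eq_integral_sq_condExp (hm : m ≤ m₀) [SigmaFinite (μ.trim hm)]
    {f g : α → ℝ} (hfg : μ[fun x => f x * g x|m] =ᵐ[μ] fun x => μ[f|m] x * μ[g|m] x)
    (hf_eq_g : μ[f|m] =ᵐ[μ] μ[g|m]) :
    ∫ x, f x * g x ∂μ = ∫ x, (μ[f|m] x) ^ 2 ∂μ := by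
  rw [← integral_condExp hm]
  refine integral_congr_ae ?_
  filter_upwards [hfg, hf_eq_g] with x hx hx'
  rw [hx, sq, hx']

end MeasureTheory

namespace ProbabilityTheory

theorem tendsto_truncation_natCast (f : α → ℝ) (x : α) :
    Tendsto (fun n : ℕ => truncation f n x) atTop (𝓝 (f x)) :=
  tendsto_const_nhds.congr' <| (tendsto_natCast_atTop_atTop.eventually_gt_atTop |f x|).mono
    fun _ hn => (truncation_eq_self hn).symm

theorem tendsto_integral_truncation_mul {f g : α → ℝ} (hf : MemLp f 2 μ) (hg : MemLp g 2 μ) :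
    Tendsto (fun n : ℕ => ∫ x, truncation f n x * truncation g n x ∂μ) atTop
      (𝓝 (∫ x, f x * g x ∂μ)) := by
  refine tendsto_integral_of_dominated_convergence (fun x => |f x| * |g x|)
    (fun n => hf.1.truncation.mul hg.1.truncation) (hf.abs.integrable_mul hg.abs)
    (fun n => ae_of_all _ fun x => ?_)
    (ae_of_all _ fun x => (tendsto_truncation_natCast f x).mul (tendsto_truncation_natCast g x))
  rw [Real.norm_eq_abs, abs_mul]
  exact mul_le_mul (abs_truncation_le_abs_self f n x) (abs_truncation_le_abs_self g n x)
    (abs_nonneg _) (abs_nonneg _)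

theorem tendsto_eLpNorm_truncation_sub [IsFiniteMeasure μ] {p : ℝ≥0∞} (hp : 1 ≤ p) (hp' : p ≠ ∞)
    {f : α → ℝ} (hf : MemLp f p μ) :
    Tendsto (fun n : ℕ => eLpNorm (truncation f n - f) p μ) atTop (𝓝 0) :=
  tendsto_Lp_finite_of_tendsto_ae hp hp' (fun _ => hf.1.truncation) hf
    (unifIntegrable_of_norm_le hp hp' hf fun n =>
      ae_of_all _ fun x => abs_truncation_le_abs_self f n x)
    (ae_of_all _ (tendsto_truncation_natCast f))

end ProbabilityTheory

end

theorem pick_freeze_identity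
    {Ω E F : Type*} (𝓖 : MeasurableSpace Ω)
    [MeasurableSpace Ω] [MeasurableSpace E] [MeasurableSpace F]
    (P : Measure Ω) [IsProbabilityMeasure P]
    (Y : Ω → E) (X X' : Ω → F) (f : F → ℝ)
    (hY : Measurable Y) (hf : Measurable f)
    (hL2 : MemLp (fun ω => f (X ω)) 2 P) (hL2' : MemLp (fun ω => f (X' ω)) 2 P)
    (h𝓖 : 𝓖 = MeasurableSpace.comap Y inferInstance)
    -- conditional independence of `X` and `X'` given `𝓖`
    (hCondIndep : ∀ g h : F → ℝ, Measurable g → Measurable h →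
      (∃ C, ∀ x, |g x| ≤ C) → (∃ C, ∀ x, |h x| ≤ C) →
      P[(fun ω => g (X ω) * h (X' ω))|𝓖]
        =ᵐ[P] fun ω => ((P[(fun ω' => g (X ω'))|𝓖]) ω) * ((P[(fun ω' => h (X' ω'))|𝓖]) ω))
    -- `X` and `X'` have the same conditional distribution given `𝓖`
    (hSameCondDist : ∀ g : F → ℝ, Measurable g → (∃ C, ∀ x, |g x| ≤ C) →
      P[(fun ω => g (X ω))|𝓖] =ᵐ[P] P[(fun ω => g (X' ω))|𝓖])
    (μ σY2 : ℝ) (hμ : μ = ∫ ω, f (X ω) ∂P)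
    (hσY2 : σY2 = variance (P[(fun ω => f (X ω))|𝓖]) P) :
    ∫ ω, f (X ω) * f (X' ω) ∂P = σY2 + μ ^ 2 := by
  have hm : 𝓖 ≤ ‹MeasurableSpace Ω› := h𝓖 ▸ hY.comap_le
  have hbounded (n : ℕ) : ∃ C, ∀ x, |truncation f n x| ≤ C :=
    ⟨_, abs_truncation_le_bound f n⟩
  have htrunc (n : ℕ) : ∫ ω, truncation f n (X ω) * truncation f n (X' ω) ∂P
      = ∫ ω, (P[fun ω => truncation f n (X ω)|𝓖] ω) ^ 2 ∂P :=
    integral_mul_eq_integral_sq_condExp hm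
      (hCondIndep _ _ (hf.truncation n) (hf.truncation n) (hbounded n) (hbounded n))
      (hSameCondDist _ (hf.truncation n) (hbounded n))
  have hsq : ∫ ω, f (X ω) * f (X' ω) ∂P = ∫ ω, (P[fun ω => f (X ω)|𝓖] ω) ^ 2 ∂P :=
    tendsto_nhds_unique ((tendsto_integral_truncation_mul hL2 hL2').congr htrunc)
      (tendsto_integral_sq_condExp (fun _ => hL2.1.memLp_truncation) hL2
        (tendsto_eLpNorm_truncation_sub one_le_two (by norm_num) hL2))
  rw [hsq, hσY2, variance_eq_sub (hL2.condExp one_le_two), hμ, integral_condExp hm]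
  simp
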